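/- Let M be a representation of the equioriented type A_n quiver over ℂ, let 1 ≤ q ≤ s ≤ n, set L := U_{q,s}, and suppose there exists an injective morphism L → M. Then there exists an injective morphism ι : L → M such that the quotient representation Q := M/ι(L) (with components M_p/ι_p(L_p) and maps induced by the f^M_p) satisfies, for all 1 ≤ k ≤ ℓ ≤ n: r^Q_{k,ℓ} = r^M_{k,ℓ} − 1 if q ≤ ℓ ≤ s and r^M_{q,ℓ} − r^M_{q,s+1} ≤ r^M_{k,ℓ} − r^M_{k,s+1}, and r^Q_{k,ℓ} = r^M_{k,ℓ} otherwise; moreover, for every injective morphism ι′ : L → M and all 1 ≤ k ≤ ℓ ≤ n, the quotient M/ι′(L) satisfies r^{M/ι′(L)}_{k,ℓ} ≤ r^Q_{k,ℓ}. -/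

import Mathlib

open Module

/-- A representation of the equioriented type `A_n` quiver over `ℂ`: finite-dimensional
complex vector spaces `V i` (only the indices `1 ≤ i ≤ n` carry content, the spaces at
index `0` and at indices `> n` are required to be trivial) together with linear maps
`f i : V i → V (i+1)`. -/
structure ARep (n : ℕ) where
  V : ℕ → Type
  [instAddCommGroup : ∀ i, AddCommGroup (V i)]
  [instModule : ∀ i, Module ℂ (V i)]
  [instFiniteDimensional : ∀ i, FiniteDimensional ℂ (V i)]
  f : ∀ i, V i →ₗ[ℂ] V (i + 1)
  triv : ∀ i, i = 0 ∨ n < i → Subsingleton (V i)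

attribute [instance] ARep.instAddCommGroup ARep.instModule ARep.instFiniteDimensional

namespace ARep

/-- The composite map `f_{i,i+k} : M_i → M_{i+k}` (the identity for `k = 0`). -/
noncomputable def F {n : ℕ} (M : ARep n) (i : ℕ) : (k : ℕ) → (M.V i →ₗ[ℂ] M.V (i + k))
  | 0 => LinearMap.id
  | (k + 1) => (M.f (i + k)).comp (M.F i k)

/-- The rank sequence `r^M_{i,j} = rank f_{i,j}`.  (For `i = 0` the source space is
trivial and for `j = n+1` the target space is trivial, so the conventions
`r^M_{0,·} = 0 = r^M_{·,n+1}` hold automatically.) -/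
noncomputable def r {n : ℕ} (M : ARep n) (i j : ℕ) : ℕ :=
  Module.finrank ℂ (LinearMap.range (M.F i (j - i)))

end ARep

/-- A morphism of representations of the equioriented type `A_n` quiver. -/
structure ARepHom {n : ℕ} (M N : ARep n) where
  φ : ∀ i, M.V i →ₗ[ℂ] N.V i
  comm : ∀ i, (φ (i + 1)).comp (M.f i) = (N.f i).comp (φ i)

/-- Two representations are isomorphic if there is a morphism all of whose components
are bijective. -/
def ARepIso {n : ℕ} (M N : ARep n) : Prop :=
  ∃ h : ARepHom M N, ∀ i, Function.Bijective (h.φ i)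

/-- The condition for the interval representation `U_{i,j}` to have a nonzero space at
vertex `k`. -/
def Ucond (n i j k : ℕ) : Prop := 1 ≤ k ∧ k ≤ n ∧ i ≤ k ∧ k ≤ j

instance (n i j k : ℕ) : Decidable (Ucond n i j k) := by unfold Ucond; infer_instance

/-- The space of `U_{i,j}` at vertex `k`, realized as a submodule of `ℂ`. -/
noncomputable def Uspace (n i j k : ℕ) : Submodule ℂ ℂ := if Ucond n i j k then ⊤ else ⊥

/-- The indecomposable interval representation `U_{i,j}` (for `1 ≤ i ≤ j ≤ n`):
one-dimensional at the vertices `i ≤ k ≤ j`, zero elsewhere, with identity structure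
maps inside the interval. -/
noncomputable def Urep (n i j : ℕ) : ARep n where
  V k := ↥(Uspace n i j k)
  f k := LinearMap.restrict
    (if Ucond n i j k ∧ Ucond n i j (k + 1) then (LinearMap.id : ℂ →ₗ[ℂ] ℂ) else 0)
    (p := Uspace n i j k) (q := Uspace n i j (k + 1))
    (by
      intro x hx
      by_cases h : Ucond n i j k ∧ Ucond n i j (k + 1)
      · rw [if_pos h]
        simp [Uspace, if_pos h.2]
      · rw [if_neg h]
        simp)
  triv k hk := by
    have hbot : Uspace n i j k = ⊥ := by
      simp only [Uspace]; rw [if_neg]; unfold Ucond; omega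
    have h0 := (Submodule.eq_bot_iff _).mp hbot
    exact ⟨fun a b => Subtype.ext ((h0 a.1 a.2).trans (h0 b.1 b.2).symm)⟩

/-- The componentwise direct sum of two representations. -/
noncomputable def ARep.dsum {n : ℕ} (M N : ARep n) : ARep n where
  V i := M.V i × N.V i
  f i := (M.f i).prodMap (N.f i)
  triv i hi := by
    haveI := M.triv i hi
    haveI := N.triv i hi
    exact ⟨fun a b => Prod.ext (Subsingleton.elim _ _) (Subsingleton.elim _ _)⟩

/-- A representation is nonzero if some vector space is nonzero. -/
def ARep.Nonzero {n : ℕ} (M : ARep n) : Prop := ∃ i, ∃ v : M.V i, v ≠ 0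

/-- The index set of segments `1 ≤ i ≤ j ≤ n`. -/
def SegIdx (n : ℕ) : Type :=
  {p : Fin (n + 1) × Fin (n + 1) // 1 ≤ p.1.1 ∧ p.1.1 ≤ p.2.1}

instance (n : ℕ) : Fintype (SegIdx n) := by unfold SegIdx; infer_instance

/-- The direct sum `⊕_{1 ≤ i ≤ j ≤ n} U_{i,j}^{⊕ m i j}`, taken componentwise. -/
noncomputable def sumU (n : ℕ) (m : ℕ → ℕ → ℕ) : ARep n where
  V k := ∀ p : SegIdx n, Fin (m p.1.1.1 p.1.2.1) → (Urep n p.1.1.1 p.1.2.1).V k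
  f k := LinearMap.pi fun p =>
    (((Urep n p.1.1.1 p.1.2.1).f k).compLeft (Fin (m p.1.1.1 p.1.2.1))).comp
      (LinearMap.proj p)
  triv k hk := by
    haveI := fun p : SegIdx n => (Urep n p.1.1.1 p.1.2.1).triv k hk
    exact ⟨fun a b => funext fun p => Subsingleton.elim _ _⟩

/-- The space of morphisms `Hom(M,N)` realized as a subspace of the product of the
spaces of componentwise linear maps. -/
noncomputable def HomSubspace {n : ℕ} (M N : ARep n) :
    Submodule ℂ (∀ k, M.V k →ₗ[ℂ] N.V k) where
  carrier := {φ | ∀ k, (φ (k + 1)).comp (M.f k) = (N.f k).comp (φ k)}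
  add_mem' := by
    intro a b ha hb k
    simp only [Pi.add_apply, LinearMap.add_comp, LinearMap.comp_add, ha k, hb k]
  zero_mem' := by
    intro k
    simp
  smul_mem' := by
    intro c a ha k
    simp only [Pi.smul_apply, LinearMap.smul_comp, LinearMap.comp_smul, ha k]

/-- The quotient of a representation by a family of subspaces stable under the
structure maps. -/
noncomputable def ARep.quot {n : ℕ} (M : ARep n) (S : ∀ k, Submodule ℂ (M.V k))
    (h : ∀ k, S k ≤ (S (k + 1)).comap (M.f k)) : ARep n where
  V k := M.V k ⧸ S k
  f k := Submodule.mapQ (S k) (S (k + 1)) (M.f k) (h k)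
  triv k hk := by
    haveI := M.triv k hk
    refine ⟨fun a b => ?_⟩
    obtain ⟨x, rfl⟩ := Submodule.Quotient.mk_surjective _ a
    obtain ⟨y, rfl⟩ := Submodule.Quotient.mk_surjective _ b
    exact congrArg _ (Subsingleton.elim x y)

/-- The quotient `M / ι(L)` of `M` by the image of a morphism `ι : L → M`. -/
noncomputable def quotByHom {n : ℕ} {L M : ARep n} (ι : ARepHom L M) : ARep n :=
  M.quot (fun k => LinearMap.range (ι.φ k)) (by
    intro k x hx
    obtain ⟨y, rfl⟩ := hx
    rw [Submodule.mem_comap]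
    exact ⟨L.f k y, LinearMap.congr_fun (ι.comm k) y⟩)

/-- The subrepresentation of `M` given by a family of subspaces stable under the
structure maps. -/
noncomputable def ARep.sub {n : ℕ} (M : ARep n) (N : ∀ i, Submodule ℂ (M.V i))
    (h : ∀ i, ∀ x ∈ N i, M.f i x ∈ N (i + 1)) : ARep n where
  V i := ↥(N i)
  f i := (M.f i).restrict (h i)
  triv i hi := by
    haveI := M.triv i hi
    exact ⟨fun a b => Subtype.ext (Subsingleton.elim _ _)⟩

/-- The subquotient representation `P/S` of `M`, for families of subspaces
`S k ≤ P k` both stable under the structure maps. -/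
noncomputable def ARep.subquot {n : ℕ} (M : ARep n) (P S : ∀ k, Submodule ℂ (M.V k))
    (hSP : ∀ k, S k ≤ P k)
    (hP : ∀ k, ∀ x ∈ P k, M.f k x ∈ P (k + 1))
    (hS : ∀ k, ∀ x ∈ S k, M.f k x ∈ S (k + 1)) : ARep n where
  V k := ↥(P k) ⧸ (S k).comap (P k).subtype
  f k := Submodule.mapQ _ _ ((M.f k).restrict (hP k)) (by
    intro x hx
    rw [Submodule.mem_comap] at hx ⊢
    exact hS k x.1 hx)
  triv k hk := by
    haveI := M.triv k hk
    haveI : Subsingleton (↥(P k)) := ⟨fun a b => Subtype.ext (Subsingleton.elim _ _)⟩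
    refine ⟨fun a b => ?_⟩
    obtain ⟨x, rfl⟩ := Submodule.Quotient.mk_surjective _ a
    obtain ⟨y, rfl⟩ := Submodule.Quotient.mk_surjective _ b
    exact congrArg _ (Subsingleton.elim x y)

/-- A `σ`-compatible `ε`-form on the underlying graded vector space of `M` making `M`
an `ε`-representation: a nondegenerate bilinear form `B` on `M^0 = ⊕_i M_i` with
`B v w = ε B w v`, with `B (M_i) (M_j) = 0` unless `i + j = n + 1` (i.e. `j = σ(i)`),
and anti-compatible with the structure maps. -/
structure EpsForm (n : ℕ) (M : ARep n) (ε : ℂ) where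
  B : (∀ i, M.V i) →ₗ[ℂ] (∀ i, M.V i) →ₗ[ℂ] ℂ
  nondeg : ∀ v, (∀ w, B v w = 0) → v = 0
  eps_symm : ∀ v w, B v w = ε * B w v
  graded : ∀ (i j : ℕ) (v : M.V i) (w : M.V j), i + j ≠ n + 1 →
    B (Pi.single i v) (Pi.single j w) = 0
  compat : ∀ i, 1 ≤ i → i + 1 ≤ n → ∀ (v : M.V i) (w : M.V (n - i)),
    B (Pi.single (i + 1) (M.f i v)) (Pi.single (n - i) w)
      + B (Pi.single i v) (Pi.single (n - i + 1) (M.f (n - i) w)) = 0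

/-- The orthogonal complement, at vertex `p`, of the image of a morphism `ι : L → M`
with respect to the form `E`. -/
noncomputable def perpAt {n : ℕ} {L M : ARep n} {ε : ℂ} (E : EpsForm n M ε)
    (ι : ARepHom L M) (p : ℕ) : Submodule ℂ (M.V p) where
  carrier := {y | ∀ (q : ℕ) (x : M.V q), x ∈ LinearMap.range (ι.φ q) →
    E.B (Pi.single p y) (Pi.single q x) = 0}
  add_mem' := by
    intro a b ha hb q x hx
    rw [Pi.single_add, map_add, LinearMap.add_apply, ha q x hx, hb q x hx, add_zero]
  zero_mem' := by
    intro q x hx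
    rw [Pi.single_zero, map_zero, LinearMap.zero_apply]
  smul_mem' := by
    intro c a ha q x hx
    rw [Pi.single_smul, map_smul, LinearMap.smul_apply, ha q x hx, smul_zero]


section Aux

open Submodule LinearMap Module

variable {n : ℕ}

/-- Cast between the spaces of a representation along an equality of indices. -/
noncomputable def ARep.castV (M : ARep n) {i j : ℕ} (h : i = j) : M.V i ≃ₗ[ℂ] M.V j :=
  h ▸ LinearEquiv.refl ℂ (M.V i)

lemma ARep.castV_rfl (M : ARep n) {i : ℕ} (x : M.V i) : M.castV rfl x = x := rfl

lemma ARep.f_castV (M : ARep n) {p p' : ℕ} (h : p = p') (y : M.V p) :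
    M.f p' (M.castV h y) = M.castV (by rw [h]) (M.f p y) := by subst h; rfl

lemma ARep.F_cast_arg (M : ARep n) {i a a' j : ℕ} (ha : a = a') (h : i + a = j)
    (h' : i + a' = j) (x : M.V i) :
    M.castV h (M.F i a x) = M.castV h' (M.F i a' x) := by subst ha; rfl

/-- The transport of `F` to arbitrary pairs of indices `k ≤ l` (junk value `0` if
`k > l`). -/
noncomputable def ARep.FF (M : ARep n) (k l : ℕ) : M.V k →ₗ[ℂ] M.V l :=
  if h : k + (l - k) = l then ((M.castV h).toLinearMap).comp (M.F k (l - k)) else 0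

lemma ARep.FF_eq (M : ARep n) {k l : ℕ} (h : k + (l - k) = l) :
    M.FF k l = ((M.castV h).toLinearMap).comp (M.F k (l - k)) := dif_pos h

lemma ARep.FF_apply' (M : ARep n) {k a l : ℕ} (h : k + a = l) (x : M.V k) :
    M.FF k l x = M.castV h (M.F k a x) := by
  have h' : k + (l - k) = l := by omega
  rw [M.FF_eq h']
  exact M.F_cast_arg (by omega) h' h x

lemma ARep.FF_self (M : ARep n) (k : ℕ) (x : M.V k) : M.FF k k x = x := by
  rw [M.FF_apply' (Nat.add_zero k)]; rfl

lemma ARep.FF_succ (M : ARep n) {k l : ℕ} (hkl : k ≤ l) (x : M.V k) :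
    M.FF k (l + 1) x = M.f l (M.FF k l x) := by
  rw [M.FF_apply' (show k + (l - k) = l by omega), M.FF_apply' (show k + ((l - k) + 1) = l + 1 by omega),
    M.f_castV]
  rfl

lemma ARep.FF_comp (M : ARep n) {k l m : ℕ} (hkl : k ≤ l) (hlm : l ≤ m) (x : M.V k) :
    M.FF l m (M.FF k l x) = M.FF k m x := by
  obtain ⟨d, rfl⟩ : ∃ d, m = l + d := ⟨m - l, by omega⟩
  induction d with
  | zero => exact M.FF_self l _
  | succ d ih =>
      show M.FF l (l + d + 1) (M.FF k l x) = M.FF k (l + d + 1) x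
      rw [M.FF_succ (show l ≤ l + d by omega), M.FF_succ (show k ≤ l + d by omega),
        ih (by omega)]

lemma ARep.range_FF_mono (M : ARep n) {k k' l : ℕ} (h : k ≤ k') (h' : k' ≤ l) :
    LinearMap.range (M.FF k l) ≤ LinearMap.range (M.FF k' l) := by
  rintro _ ⟨x, rfl⟩
  exact ⟨M.FF k k' x, M.FF_comp h h' x⟩

lemma ARep.r_eq_FF (M : ARep n) {k l : ℕ} (hkl : k ≤ l) :
    M.r k l = finrank ℂ (LinearMap.range (M.FF k l)) := by
  have h : k + (l - k) = l := by omega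
  rw [ARep.r, M.FF_eq h, LinearMap.range_comp]
  exact (LinearEquiv.finrank_map_eq (M.castV h) _).symm

end Aux
section Aux2

open Submodule LinearMap Module

variable {n : ℕ}

lemma ARep.quot_castV_mk {M : ARep n} {S : ∀ k, Submodule ℂ (M.V k)}
    {h : ∀ k, S k ≤ (S (k + 1)).comap (M.f k)} {i j : ℕ} (hij : i = j) (x : M.V i) :
    (M.quot S h).castV hij (Submodule.Quotient.mk x) =
      Submodule.Quotient.mk (M.castV hij x) := by subst hij; rfl

lemma ARep.quot_f_mk {M : ARep n} {S : ∀ k, Submodule ℂ (M.V k)}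
    {h : ∀ k, S k ≤ (S (k + 1)).comap (M.f k)} (p : ℕ) (x : M.V p) :
    (M.quot S h).f p (Submodule.Quotient.mk x) = Submodule.Quotient.mk (M.f p x) :=
  Submodule.mapQ_apply (S p) (S (p + 1)) (f := M.f p) (h := h p) x

lemma ARep.quot_FF_mk {M : ARep n} {S : ∀ k, Submodule ℂ (M.V k)}
    {h : ∀ k, S k ≤ (S (k + 1)).comap (M.f k)} {k l : ℕ} (hkl : k ≤ l) (x : M.V k) :
    (M.quot S h).FF k l (Submodule.Quotient.mk x) = Submodule.Quotient.mk (M.FF k l x) := by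
  obtain ⟨d, rfl⟩ : ∃ d, l = k + d := ⟨l - k, by omega⟩
  induction d with
  | zero =>
      show (M.quot S h).FF k k _ = Submodule.Quotient.mk (M.FF k k x)
      exact ((M.quot S h).FF_self k _).trans (congrArg Submodule.Quotient.mk (M.FF_self k x)).symm
  | succ d ih =>
      show (M.quot S h).FF k (k + d + 1) _ = Submodule.Quotient.mk (M.FF k (k + d + 1) x)
      exact ((M.quot S h).FF_succ (by omega) _).trans
        ((congrArg ((M.quot S h).f (k + d)) (ih (by omega))).trans
          ((ARep.quot_f_mk (M := M) (S := S) (h := h) (k + d) _).trans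
            (congrArg Submodule.Quotient.mk (M.FF_succ (by omega) x).symm)))

lemma ARep.range_quot_FF {M : ARep n} {S : ∀ k, Submodule ℂ (M.V k)}
    {h : ∀ k, S k ≤ (S (k + 1)).comap (M.f k)} {k l : ℕ} (hkl : k ≤ l) :
    LinearMap.range ((M.quot S h).FF k l) =
      Submodule.map (S l).mkQ (LinearMap.range (M.FF k l)) := by
  apply le_antisymm
  · rintro _ ⟨u, rfl⟩
    obtain ⟨x, rfl⟩ := Submodule.Quotient.mk_surjective (S k) u
    rw [ARep.quot_FF_mk hkl]
    exact (Submodule.mem_map_of_mem (f := (S l).mkQ) ⟨x, rfl⟩ :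
      Submodule.Quotient.mk (M.FF k l x) ∈ Submodule.map (S l).mkQ (LinearMap.range (M.FF k l)))
  · rintro _ ⟨_, ⟨x, rfl⟩, rfl⟩
    exact ⟨Submodule.Quotient.mk x, ARep.quot_FF_mk hkl x⟩

lemma finrank_map_mkQ_add {V : Type} [AddCommGroup V] [Module ℂ V] [FiniteDimensional ℂ V]
    (W T : Submodule ℂ V) :
    finrank ℂ (W.map T.mkQ) + finrank ℂ ↥(W ⊓ T) = finrank ℂ ↥W := by
  have h := LinearMap.finrank_range_add_finrank_ker (T.mkQ.domRestrict W)
  rw [LinearMap.range_domRestrict, LinearMap.ker_domRestrict, Submodule.ker_mkQ] at h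
  have e : Submodule.comap W.subtype T = Submodule.comap W.subtype (W ⊓ T) := by
    ext x
    simp only [Submodule.mem_comap, Submodule.mem_inf, Submodule.coe_subtype]
    exact ⟨fun hx => ⟨x.2, hx⟩, fun hx => hx.2⟩
  rw [e, LinearEquiv.finrank_eq (Submodule.comapSubtypeEquivOfLe (inf_le_left : W ⊓ T ≤ W))] at h
  exact h

/-- The fundamental quotient-rank identity. -/
lemma quot_r_add {n : ℕ} {L M : ARep n} (ι : ARepHom L M) {k l : ℕ} (hkl : k ≤ l) :
    (quotByHom ι).r k l +
      finrank ℂ ↥(LinearMap.range (M.FF k l) ⊓ LinearMap.range (ι.φ l)) = M.r k l := by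
  rw [(quotByHom ι).r_eq_FF hkl, M.r_eq_FF hkl]
  unfold quotByHom
  rw [ARep.range_quot_FF hkl]
  exact finrank_map_mkQ_add _ _

/-- Rank–nullity through an intermediate vertex. -/
lemma r_inf_ker {n : ℕ} (M : ARep n) {k l t : ℕ} (hkl : k ≤ l) (hlt : l ≤ t) :
    M.r k l = M.r k t +
      finrank ℂ ↥(LinearMap.range (M.FF k l) ⊓ LinearMap.ker (M.FF l t)) := by
  have h := LinearMap.finrank_range_add_finrank_ker ((M.FF l t).domRestrict
    (LinearMap.range (M.FF k l)))
  rw [LinearMap.range_domRestrict, LinearMap.ker_domRestrict] at h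
  have e1 : Submodule.map (M.FF l t) (LinearMap.range (M.FF k l)) =
      LinearMap.range (M.FF k t) := by
    apply le_antisymm
    · rintro _ ⟨_, ⟨x, rfl⟩, rfl⟩; exact ⟨x, (M.FF_comp hkl hlt x).symm ▸ rfl⟩
    · rintro _ ⟨x, rfl⟩
      exact ⟨M.FF k l x, ⟨⟨x, rfl⟩, M.FF_comp hkl hlt x⟩⟩
  have e2 : Submodule.comap (LinearMap.range (M.FF k l)).subtype (LinearMap.ker (M.FF l t)) =
      Submodule.comap (LinearMap.range (M.FF k l)).subtype
        (LinearMap.range (M.FF k l) ⊓ LinearMap.ker (M.FF l t)) := by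
    ext x
    simp only [Submodule.mem_comap, Submodule.mem_inf, Submodule.coe_subtype]
    exact ⟨fun hx => ⟨x.2, hx⟩, fun hx => hx.2⟩
  rw [e1, e2, LinearEquiv.finrank_eq (Submodule.comapSubtypeEquivOfLe
    (inf_le_left : LinearMap.range (M.FF k l) ⊓ LinearMap.ker (M.FF l t) ≤ _))] at h
  rw [M.r_eq_FF hkl, M.r_eq_FF (hkl.trans hlt), ← h]

end Aux2
section Aux3

open Submodule LinearMap Module

variable {n q s : ℕ}

lemma Uspace_eq_top {k : ℕ} (h : Ucond n q s k) : Uspace n q s k = ⊤ := if_pos h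

/-- The underlying complex number of an element of `U_{q,s}` at vertex `k`. -/
def Uval {k : ℕ} (c : (Urep n q s).V k) : ℂ := Subtype.val c

lemma Uval_mem {k : ℕ} (c : (Urep n q s).V k) : Uval c ∈ Uspace n q s k := c.2

lemma Uext {k : ℕ} {a b : (Urep n q s).V k} (h : Uval a = Uval b) : a = b := Subtype.ext h

lemma Uval_smul {k : ℕ} (c : ℂ) (a : (Urep n q s).V k) : Uval (c • a) = c * Uval a := rfl

lemma Uval_zero {k : ℕ} : Uval (0 : (Urep n q s).V k) = 0 := rfl

lemma Uspace_eq_bot {k : ℕ} (h : ¬ Ucond n q s k) : Uspace n q s k = ⊥ := if_neg h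

lemma Uval_eq_zero {k : ℕ} (h : ¬ Ucond n q s k) (c : (Urep n q s).V k) : Uval c = 0 := by
  have := Uval_mem c
  rw [Uspace_eq_bot h] at this
  exact this

lemma Uf_val (k : ℕ) (c : (Urep n q s).V k) :
    Uval ((Urep n q s).f k c) =
      if Ucond n q s k ∧ Ucond n q s (k + 1) then Uval c else 0 := by
  by_cases h : Ucond n q s k ∧ Ucond n q s (k + 1)
  · rw [if_pos h]
    show (if Ucond n q s k ∧ Ucond n q s (k + 1) then (LinearMap.id : ℂ →ₗ[ℂ] ℂ) else 0)
      (Uval c) = Uval c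
    rw [if_pos h]
    rfl
  · rw [if_neg h]
    show (if Ucond n q s k ∧ Ucond n q s (k + 1) then (LinearMap.id : ℂ →ₗ[ℂ] ℂ) else 0)
      (Uval c) = 0
    rw [if_neg h]
    rfl

/-- The element `1` of `U_{q,s}` at a vertex `k` of its support. -/
noncomputable def Uone {k : ℕ} (h : Ucond n q s k) : (Urep n q s).V k :=
  ⟨1, by rw [Uspace_eq_top h]; trivial⟩

lemma Uval_one {k : ℕ} (h : Ucond n q s k) : Uval (Uone h) = 1 := rfl

lemma Uone_ne_zero {k : ℕ} (h : Ucond n q s k) : Uone h ≠ 0 := by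
  intro hc
  have : Uval (Uone h) = 0 := by rw [hc]; rfl
  exact one_ne_zero this

/-- The morphism `U_{q,s} → M` determined by a vector `v` killed by `f_{q,s+1}`. -/
noncomputable def iotaOf (M : ARep n) (hq : 1 ≤ q) (hqs : q ≤ s) (hs : s ≤ n)
    (v : M.V q) (hv0 : M.FF q (s + 1) v = 0) : ARepHom (Urep n q s) M where
  φ k := ((Uspace n q s k).subtype).smulRight (M.FF q k v)
  comm k := by
    apply LinearMap.ext
    intro c
    show Uval ((Urep n q s).f k c) • M.FF q (k + 1) v = M.f k (Uval c • M.FF q k v)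
    rw [Uf_val, map_smul]
    by_cases hP : Ucond n q s k ∧ Ucond n q s (k + 1)
    · rw [if_pos hP]
      congr 1
      rw [M.FF_succ hP.1.2.2.1]
    · rw [if_neg hP, zero_smul]
      by_cases hk : Ucond n q s k
      · rcases eq_or_ne k s with rfl | hks
        · rw [← M.FF_succ hqs, hv0, smul_zero]
        · have h1 := hk.1
          have h2 := hk.2.1
          have h3 := hk.2.2.1
          have h4 := hk.2.2.2
          have hkn : k = n := by
            by_contra hne
            exact hP ⟨hk, ⟨by omega, by omega, by omega, by omega⟩⟩
          haveI := M.triv (k + 1) (Or.inr (by omega))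
          rw [Subsingleton.elim (M.f k (M.FF q k v)) 0, smul_zero]
      · rw [Uval_eq_zero hk, zero_smul]

lemma iotaOf_inj (M : ARep n) (hq : 1 ≤ q) (hqs : q ≤ s) (hs : s ≤ n)
    (v : M.V q) (hv0 : M.FF q (s + 1) v = 0) (hvs : M.FF q s v ≠ 0) (k : ℕ) :
    Function.Injective ((iotaOf M hq hqs hs v hv0).φ k) := by
  by_cases hk : Ucond n q s k
  · have hw : M.FF q k v ≠ 0 := by
      intro h
      exact hvs (by rw [← M.FF_comp hk.2.2.1 hk.2.2.2, h, map_zero])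
    intro a b hab
    have hab' : Uval a • M.FF q k v = Uval b • M.FF q k v := hab
    have : (Uval a - Uval b) • M.FF q k v = 0 := by rw [sub_smul, hab', sub_self]
    rcases smul_eq_zero.1 this with h | h
    · exact Uext (sub_eq_zero.1 h)
    · exact absurd h hw
  · intro a b _
    exact Uext (by rw [Uval_eq_zero hk a, Uval_eq_zero hk b])

lemma extract_eq (M : ARep n) (hq : 1 ≤ q) (hqs : q ≤ s) (hs : s ≤ n)
    (ι : ARepHom (Urep n q s) M) {k : ℕ} (hk : Ucond n q s k) :
    ι.φ k (Uone hk) = M.FF q k (ι.φ q (Uone ⟨hq, hqs.trans hs, le_refl q, hqs⟩)) := by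
  obtain ⟨d, rfl⟩ : ∃ d, k = q + d := ⟨k - q, by have := hk.2.2.1; omega⟩
  induction d with
  | zero =>
      show ι.φ q (Uone hk) = M.FF q q (ι.φ q (Uone ⟨hq, hqs.trans hs, le_refl q, hqs⟩))
      rw [M.FF_self]
  | succ d ih =>
      have hk' : Ucond n q s (q + d) := by
        rcases hk with ⟨h1, h2, h3, h4⟩
        exact ⟨by omega, by omega, by omega, by omega⟩
      show ι.φ (q + d + 1) (Uone hk) = M.FF q (q + d + 1) _
      have hcomm := LinearMap.congr_fun (ι.comm (q + d)) (Uone hk')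
      simp only [LinearMap.comp_apply] at hcomm
      rw [M.FF_succ (by omega), ← ih hk', ← hcomm]
      congr 1
      apply Uext
      rw [Uf_val, if_pos ⟨hk', hk⟩]
      rfl

lemma extract_ker (M : ARep n) (hq : 1 ≤ q) (hqs : q ≤ s) (hs : s ≤ n)
    (ι : ARepHom (Urep n q s) M) :
    M.FF q (s + 1) (ι.φ q (Uone ⟨hq, hqs.trans hs, le_refl q, hqs⟩)) = 0 := by
  have hcs : Ucond n q s s := ⟨hq.trans hqs, hs, hqs, le_refl s⟩
  have hcomm := LinearMap.congr_fun (ι.comm s) (Uone hcs)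
  simp only [LinearMap.comp_apply] at hcomm
  rw [← M.FF_comp hqs (Nat.le_succ s), ← extract_eq M hq hqs hs ι hcs, M.FF_succ (le_refl s),
    M.FF_self, ← hcomm]
  have : (Urep n q s).f s (Uone hcs) = 0 := by
    apply Uext
    rw [Uf_val, if_neg, Uval_zero]
    rintro ⟨-, -, -, -, h4⟩
    omega
  rw [this, map_zero]

lemma extract_ne (M : ARep n) (hq : 1 ≤ q) (hqs : q ≤ s) (hs : s ≤ n)
    (ι : ARepHom (Urep n q s) M) (hinj : Function.Injective (ι.φ s)) :
    M.FF q s (ι.φ q (Uone ⟨hq, hqs.trans hs, le_refl q, hqs⟩)) ≠ 0 := by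
  have hcs : Ucond n q s s := ⟨hq.trans hqs, hs, hqs, le_refl s⟩
  rw [← extract_eq M hq hqs hs ι hcs]
  intro h
  exact Uone_ne_zero hcs (hinj (by rw [h, map_zero]))

lemma range_phi_bot (M : ARep n) (ι : ARepHom (Urep n q s) M) {k : ℕ}
    (hk : ¬ Ucond n q s k) : LinearMap.range (ι.φ k) = ⊥ := by
  rw [eq_bot_iff]
  rintro _ ⟨x, rfl⟩
  have hx : x = 0 := Subtype.ext (Uval_eq_zero hk x)
  rw [hx, map_zero]
  exact Submodule.zero_mem _

lemma range_phi_span (M : ARep n) (hq : 1 ≤ q) (hqs : q ≤ s) (hs : s ≤ n)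
    (ι : ARepHom (Urep n q s) M) {k : ℕ} (hk : Ucond n q s k) :
    LinearMap.range (ι.φ k) =
      Submodule.span ℂ {M.FF q k (ι.φ q (Uone ⟨hq, hqs.trans hs, le_refl q, hqs⟩))} := by
  rw [← extract_eq M hq hqs hs ι hk]
  apply le_antisymm
  · rintro _ ⟨x, rfl⟩
    have hx : x = Uval x • Uone hk := by
      apply Uext
      rw [Uval_smul, Uval_one, mul_one]
    rw [hx, map_smul]
    exact Submodule.smul_mem _ _ (Submodule.mem_span_singleton_self _)
  · rw [Submodule.span_le, Set.singleton_subset_iff]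
    exact ⟨Uone hk, rfl⟩

end Aux3
section Aux4

open Submodule LinearMap Module

lemma mem_range_of_cond {n : ℕ} (M : ARep n) {q s k l : ℕ} (hkl : k ≤ l) (hql : q ≤ l)
    (hls : l ≤ s)
    (hcond : (M.r q l : ℤ) - (M.r q (s + 1) : ℤ) ≤ (M.r k l : ℤ) - (M.r k (s + 1) : ℤ))
    (v : M.V q) (hv : M.FF q (s + 1) v = 0) :
    M.FF q l v ∈ LinearMap.range (M.FF k l) := by
  rcases le_total q k with hqk | hkq
  · rw [← M.FF_comp hqk hkl v]
    exact ⟨M.FF q k v, rfl⟩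
  · have hBA : LinearMap.range (M.FF k l) ⊓ LinearMap.ker (M.FF l (s + 1)) ≤
        LinearMap.range (M.FF q l) ⊓ LinearMap.ker (M.FF l (s + 1)) :=
      inf_le_inf_right _ (M.range_FF_mono hkq hql)
    have e1 := r_inf_ker M hql (show l ≤ s + 1 by omega)
    have e2 := r_inf_ker M hkl (show l ≤ s + 1 by omega)
    have hfr : finrank ℂ ↥(LinearMap.range (M.FF q l) ⊓ LinearMap.ker (M.FF l (s + 1))) ≤
        finrank ℂ ↥(LinearMap.range (M.FF k l) ⊓ LinearMap.ker (M.FF l (s + 1))) := by omega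
    have heq := Submodule.eq_of_le_of_finrank_le hBA hfr
    have hmemA : M.FF q l v ∈ LinearMap.range (M.FF q l) ⊓ LinearMap.ker (M.FF l (s + 1)) := by
      refine ⟨⟨v, rfl⟩, ?_⟩
      show M.FF l (s + 1) (M.FF q l v) = 0
      rw [M.FF_comp hql (show l ≤ s + 1 by omega), hv]
    rw [← heq] at hmemA
    exact hmemA.1

lemma cond_of_forall_mem {n : ℕ} (M : ARep n) {q s k l : ℕ} (hkl : k ≤ l) (hql : q ≤ l)
    (hls : l ≤ s)
    (hyp : ∀ v : M.V q, M.FF q (s + 1) v = 0 → M.FF q l v ∈ LinearMap.range (M.FF k l)) :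
    (M.r q l : ℤ) - (M.r q (s + 1) : ℤ) ≤ (M.r k l : ℤ) - (M.r k (s + 1) : ℤ) := by
  have hAB : LinearMap.range (M.FF q l) ⊓ LinearMap.ker (M.FF l (s + 1)) ≤
      LinearMap.range (M.FF k l) ⊓ LinearMap.ker (M.FF l (s + 1)) := by
    rintro y ⟨⟨x, rfl⟩, hker⟩
    have hx0 : M.FF q (s + 1) x = 0 := by
      rw [← M.FF_comp hql (show l ≤ s + 1 by omega) x]
      exact hker
    exact ⟨hyp x hx0, hker⟩
  have hfr := Submodule.finrank_mono hAB
  have e1 := r_inf_ker M hql (show l ≤ s + 1 by omega)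
  have e2 := r_inf_ker M hkl (show l ≤ s + 1 by omega)
  omega

end Aux4
theorem generic_quotient_rank_sequence (n q s : ℕ) (hq : 1 ≤ q) (hqs : q ≤ s)
    (hs : s ≤ n) (M : ARep n)
    (hembed : ∃ ι : ARepHom (Urep n q s) M, ∀ k, Function.Injective (ι.φ k)) :
    ∃ ι : ARepHom (Urep n q s) M, (∀ k, Function.Injective (ι.φ k)) ∧
      (∀ k l, 1 ≤ k → k ≤ l → l ≤ n →
        ((quotByHom ι).r k l : ℤ) =
          if q ≤ l ∧ l ≤ s ∧
              (M.r q l : ℤ) - (M.r q (s + 1) : ℤ) ≤ (M.r k l : ℤ) - (M.r k (s + 1) : ℤ)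
          then (M.r k l : ℤ) - 1 else (M.r k l : ℤ)) ∧
      (∀ ι' : ARepHom (Urep n q s) M, (∀ k, Function.Injective (ι'.φ k)) →
        ∀ k l, 1 ≤ k → k ≤ l → l ≤ n → (quotByHom ι').r k l ≤ (quotByHom ι).r k l) := by
  classical
  obtain ⟨ι₀, hι₀⟩ := hembed
  have hUq : Ucond n q s q := ⟨hq, hqs.trans hs, le_refl q, hqs⟩
  set v₀ : M.V q := ι₀.φ q (Uone hUq) with hv₀def
  have hv₀0 : M.FF q (s + 1) v₀ = 0 := extract_ker M hq hqs hs ι₀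
  have hv₀s : M.FF q s v₀ ≠ 0 := extract_ne M hq hqs hs ι₀ (hι₀ s)
  set K : Submodule ℂ (M.V q) := LinearMap.ker (M.FF q (s + 1)) with hKdef
  have hv₀K : v₀ ∈ K := hv₀0
  haveI : Nontrivial ↥K := by
    refine ⟨⟨v₀, hv₀K⟩, 0, fun hc => hv₀s ?_⟩
    have : v₀ = 0 := congrArg Subtype.val hc
    rw [this, map_zero]
  set P : Option (Fin (n + 1) × Fin (n + 1)) → Submodule ℂ ↥K := fun o =>
    Option.elim o (LinearMap.ker ((M.FF q s).domRestrict K)) (fun kl =>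
      if 1 ≤ (kl.1 : ℕ) ∧ (kl.1 : ℕ) ≤ (kl.2 : ℕ) ∧ q ≤ (kl.2 : ℕ) ∧ (kl.2 : ℕ) ≤ s ∧
          ¬((M.r q (kl.2 : ℕ) : ℤ) - (M.r q (s + 1) : ℤ) ≤
            (M.r (kl.1 : ℕ) (kl.2 : ℕ) : ℤ) - (M.r (kl.1 : ℕ) (s + 1) : ℤ))
      then Submodule.comap ((M.FF q (kl.2 : ℕ)).domRestrict K)
        (LinearMap.range (M.FF (kl.1 : ℕ) (kl.2 : ℕ)))
      else ⊥) with hPdef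
  have hPne : ∀ o, P o ≠ ⊤ := by
    rintro (_ | kl) hTop
    · have hmem : (⟨v₀, hv₀K⟩ : ↥K) ∈ P none := by rw [hTop]; trivial
      have : M.FF q s v₀ = 0 := hmem
      exact hv₀s this
    · by_cases hc : 1 ≤ (kl.1 : ℕ) ∧ (kl.1 : ℕ) ≤ (kl.2 : ℕ) ∧ q ≤ (kl.2 : ℕ) ∧
          (kl.2 : ℕ) ≤ s ∧
          ¬((M.r q (kl.2 : ℕ) : ℤ) - (M.r q (s + 1) : ℤ) ≤
            (M.r (kl.1 : ℕ) (kl.2 : ℕ) : ℤ) - (M.r (kl.1 : ℕ) (s + 1) : ℤ))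
      · apply hc.2.2.2.2
        apply cond_of_forall_mem M hc.2.1 hc.2.2.1 hc.2.2.2.1
        intro v hv
        have hmem : (⟨v, hv⟩ : ↥K) ∈ P (some kl) := by rw [hTop]; trivial
        have : (⟨v, hv⟩ : ↥K) ∈ (if 1 ≤ (kl.1 : ℕ) ∧ (kl.1 : ℕ) ≤ (kl.2 : ℕ) ∧
            q ≤ (kl.2 : ℕ) ∧ (kl.2 : ℕ) ≤ s ∧
            ¬((M.r q (kl.2 : ℕ) : ℤ) - (M.r q (s + 1) : ℤ) ≤
              (M.r (kl.1 : ℕ) (kl.2 : ℕ) : ℤ) - (M.r (kl.1 : ℕ) (s + 1) : ℤ))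
          then Submodule.comap ((M.FF q (kl.2 : ℕ)).domRestrict K)
            (LinearMap.range (M.FF (kl.1 : ℕ) (kl.2 : ℕ)))
          else ⊥) := hmem
        rw [if_pos hc] at this
        exact this
      · have : P (some kl) = ⊥ := by
          show (if _ then _ else _) = ⊥
          rw [if_neg hc]
        rw [this] at hTop
        exact absurd hTop bot_ne_top
  have hexists : ∃ w : ↥K, ∀ o, w ∉ P o := by
    by_contra hcon
    push_neg at hcon
    have hcovers : ⋃ o, ((P o : Set ↥K)) = Set.univ := by
      apply Set.eq_univ_of_forall
      intro w
      obtain ⟨o, ho⟩ := hcon w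
      exact Set.mem_iUnion.2 ⟨o, ho⟩
    obtain ⟨o, ho⟩ := Subspace.exists_eq_top_of_iUnion_eq_univ hcovers
    exact hPne o ho
  obtain ⟨w, hw⟩ := hexists
  set v : M.V q := (w : M.V q) with hvdef
  have hvK : M.FF q (s + 1) v = 0 := w.2
  have hvs : M.FF q s v ≠ 0 := fun h => hw none h
  have hgen : ∀ k l : ℕ, 1 ≤ k → k ≤ l → q ≤ l → l ≤ s →
      ¬((M.r q l : ℤ) - (M.r q (s + 1) : ℤ) ≤ (M.r k l : ℤ) - (M.r k (s + 1) : ℤ)) →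
      M.FF q l v ∉ LinearMap.range (M.FF k l) := by
    intro k l h1 h2 h3 h4 h5 hmem
    apply hw (some (⟨k, by omega⟩, ⟨l, by omega⟩))
    show w ∈ (if 1 ≤ k ∧ k ≤ l ∧ q ≤ l ∧ l ≤ s ∧
        ¬((M.r q l : ℤ) - (M.r q (s + 1) : ℤ) ≤ (M.r k l : ℤ) - (M.r k (s + 1) : ℤ))
      then Submodule.comap ((M.FF q l).domRestrict K) (LinearMap.range (M.FF k l))
      else ⊥)
    rw [if_pos ⟨h1, h2, h3, h4, h5⟩]
    exact hmem
  -- the generic morphism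
  set ι1 : ARepHom (Urep n q s) M := iotaOf M hq hqs hs v hvK with hι1def
  have hinj1 : ∀ k, Function.Injective (ι1.φ k) := iotaOf_inj M hq hqs hs v hvK hvs
  have hphi : ι1.φ q (Uone hUq) = v := by
    show Uval (Uone hUq) • M.FF q q v = v
    rw [Uval_one, one_smul, M.FF_self]
  -- the master counting identity, valid for every embedding
  have key : ∀ (ι' : ARepHom (Urep n q s) M), (∀ k, Function.Injective (ι'.φ k)) →
      ∀ k l : ℕ, 1 ≤ k → k ≤ l → l ≤ n →
      (quotByHom ι').r k l + (if q ≤ l ∧ l ≤ s ∧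
          M.FF q l (ι'.φ q (Uone hUq)) ∈ LinearMap.range (M.FF k l) then 1 else 0)
        = M.r k l := by
    intro ι' hinj' k l hk hkl hl
    have hq_add := quot_r_add ι' hkl
    by_cases hls : q ≤ l ∧ l ≤ s
    · have hUl : Ucond n q s l := ⟨by omega, hl, hls.1, hls.2⟩
      have hspan : LinearMap.range (ι'.φ l) =
          Submodule.span ℂ {M.FF q l (ι'.φ q (Uone hUq))} :=
        range_phi_span M hq hqs hs ι' hUl
      have hu' : M.FF q l (ι'.φ q (Uone hUq)) ≠ 0 := by
        intro h
        apply extract_ne M hq hqs hs ι' (hinj' s)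
        show M.FF q s (ι'.φ q (Uone hUq)) = 0
        rw [← M.FF_comp hls.1 hls.2, h, map_zero]
      by_cases hmem : M.FF q l (ι'.φ q (Uone hUq)) ∈ LinearMap.range (M.FF k l)
      · rw [if_pos ⟨hls.1, hls.2, hmem⟩]
        have hinf : LinearMap.range (M.FF k l) ⊓ LinearMap.range (ι'.φ l) =
            Submodule.span ℂ {M.FF q l (ι'.φ q (Uone hUq))} := by
          rw [hspan]
          exact inf_eq_right.2 ((Submodule.span_singleton_le_iff_mem _ _).2 hmem)
        rw [hinf, finrank_span_singleton hu'] at hq_add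
        exact hq_add
      · rw [if_neg (fun hcc => hmem hcc.2.2), add_zero]
        have hinf : LinearMap.range (M.FF k l) ⊓ LinearMap.range (ι'.φ l) = ⊥ := by
          rw [hspan, eq_bot_iff]
          rintro x ⟨hx1, hx2⟩
          obtain ⟨c, rfl⟩ := Submodule.mem_span_singleton.1 hx2
          rcases eq_or_ne c 0 with rfl | hc
          · rw [zero_smul]
            exact Submodule.zero_mem ⊥
          · exact absurd (by
              simpa [smul_smul, inv_mul_cancel₀ hc] using
                Submodule.smul_mem (LinearMap.range (M.FF k l)) c⁻¹ hx1) hmem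
        rw [hinf, finrank_bot] at hq_add
        simpa using hq_add
    · rw [if_neg (fun hcc => hls ⟨hcc.1, hcc.2.1⟩), add_zero]
      have hbot := range_phi_bot M ι' (fun hU : Ucond n q s l => hls ⟨hU.2.2.1, hU.2.2.2⟩)
      rw [hbot, inf_bot_eq, finrank_bot] at hq_add
      simpa using hq_add
  -- translation between the membership condition and the rank condition for generic v
  have hiff : ∀ k l : ℕ, 1 ≤ k → k ≤ l → l ≤ n →
      ((q ≤ l ∧ l ≤ s ∧ M.FF q l v ∈ LinearMap.range (M.FF k l)) ↔
        (q ≤ l ∧ l ≤ s ∧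
          (M.r q l : ℤ) - (M.r q (s + 1) : ℤ) ≤ (M.r k l : ℤ) - (M.r k (s + 1) : ℤ))) := by
    intro k l hk hkl hl
    constructor
    · rintro ⟨h1, h2, h3⟩
      refine ⟨h1, h2, ?_⟩
      by_contra hc
      exact hgen k l hk hkl h1 h2 hc h3
    · rintro ⟨h1, h2, h3⟩
      exact ⟨h1, h2, mem_range_of_cond M hkl h1 h2 h3 v hvK⟩
  have hform : ∀ k l : ℕ, 1 ≤ k → k ≤ l → l ≤ n →
      ((quotByHom ι1).r k l : ℤ) =
        if q ≤ l ∧ l ≤ s ∧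
            (M.r q l : ℤ) - (M.r q (s + 1) : ℤ) ≤ (M.r k l : ℤ) - (M.r k (s + 1) : ℤ)
        then (M.r k l : ℤ) - 1 else (M.r k l : ℤ) := by
    intro k l hk hkl hl
    have hkey := key ι1 hinj1 k l hk hkl hl
    rw [hphi] at hkey
    by_cases hcond : q ≤ l ∧ l ≤ s ∧
        (M.r q l : ℤ) - (M.r q (s + 1) : ℤ) ≤ (M.r k l : ℤ) - (M.r k (s + 1) : ℤ)
    · rw [if_pos hcond]
      rw [if_pos ((hiff k l hk hkl hl).2 hcond)] at hkey
      omega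
    · rw [if_neg hcond]
      rw [if_neg (fun hmm => hcond ((hiff k l hk hkl hl).1 hmm)), add_zero] at hkey
      omega
  refine ⟨ι1, hinj1, hform, ?_⟩
  intro ι' hinj' k l hk hkl hl
  have hkey' := key ι' hinj' k l hk hkl hl
  have hkey := key ι1 hinj1 k l hk hkl hl
  rw [hphi] at hkey
  by_cases hcond : q ≤ l ∧ l ≤ s ∧
      (M.r q l : ℤ) - (M.r q (s + 1) : ℤ) ≤ (M.r k l : ℤ) - (M.r k (s + 1) : ℤ)
  · have hv'0 : M.FF q (s + 1) (ι'.φ q (Uone hUq)) = 0 := extract_ker M hq hqs hs ι'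
    have hmem' := mem_range_of_cond M hkl hcond.1 hcond.2.1 hcond.2.2 _ hv'0
    rw [if_pos ⟨hcond.1, hcond.2.1, hmem'⟩] at hkey'
    rw [if_pos ((hiff k l hk hkl hl).2 hcond)] at hkey
    omega
  · rw [if_neg (fun hmm => hcond ((hiff k l hk hkl hl).1 hmm)), add_zero] at hkey
    omega
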